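/- The series transformation preserves the response matrix: Let (G,c) be a network with node set N and internal vertices I, and suppose v₀ ∈ I has exactly two neighbors, the distinct vertices u and w, joined to v₀ by edges of conductances c₁, c₂ > 0. Let (G',c') be the network on vertex set V∖{v₀} obtained by deleting v₀ and its edges and increasing the conductance between u and w by c₁c₂/(c₁+c₂) (adding the edge uw if it was not present). Then G' is connected, and the response matrix of (G',c') with node set N equals the response matrix of (G,c) with node set N. -/

import Mathlib

open Matrix BigOperators

/-- The Laplacian of a network given by a symmetric conductance function `c`
(zero on the diagonal and on non-edges): `Δ v v' = -c v v'` off the diagonal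
and `Δ v v = ∑_{v'} c v v'` on the diagonal. -/
noncomputable def netLap {V : Type*} [Fintype V] [DecidableEq V] (c : V → V → ℝ) :
    Matrix V V ℝ :=
  Matrix.of fun v w => if v = w then ∑ u, c v u else -c v w

/-- The response matrix `L = -A + B C⁻¹ Bᵀ` of a network with node set `N`. -/
noncomputable def respMat {V : Type*} [Fintype V] [DecidableEq V]
    (c : V → V → ℝ) (N : Finset V) : Matrix {v : V // v ∈ N} {v : V // v ∈ N} ℝ :=
  -(netLap c).submatrix (Subtype.val : {v : V // v ∈ N} → V)
      (Subtype.val : {v : V // v ∈ N} → V)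
    + (netLap c).submatrix (Subtype.val : {v : V // v ∈ N} → V)
        (Subtype.val : {v : V // v ∉ N} → V)
      * ((netLap c).submatrix (Subtype.val : {v : V // v ∉ N} → V)
          (Subtype.val : {v : V // v ∉ N} → V))⁻¹
      * ((netLap c).submatrix (Subtype.val : {v : V // v ∈ N} → V)
          (Subtype.val : {v : V // v ∉ N} → V))ᵀ

/-!
The response matrix is read off harmonic functions: if `h` is harmonic off `N`, then
`L (h|_N) = -(Δ h)|_N`. Harmonicity at `v₀` gives `(c₁ + c₂) h v₀ = c₁ h u₀ + c₂ h w₀`, so the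
current `c₁ (h u₀ - h v₀)` flowing from `u₀` through `v₀` equals `c₁c₂/(c₁+c₂) (h u₀ - h w₀)`,
the current through the new edge `u₀w₀`. Hence `h` restricted to `V ∖ {v₀}` is harmonic off `N`
for the reduced network and has the same Laplacian on the nodes. The Dirichlet Laplacians are
invertible because the energy `⟪h, Δ h⟫ = ½ ∑ c v u (h v - h u)²` of a function harmonic off `N`
and vanishing on `N` is zero, which on a connected network forces `h` to be constant.
-/

theorem Matrix.mulVec_comp_eq_submatrix_mulVec_add {ι κ V R : Type*} [Fintype V]
    [DecidableEq V] [NonUnitalNonAssocSemiring R] (M : Matrix κ V R) (r : ι → κ)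
    (s : Finset V) (h : V → R) :
    (M *ᵥ h) ∘ r = M.submatrix r (Subtype.val : {v // v ∈ s} → V) *ᵥ (h ∘ Subtype.val)
      + M.submatrix r (Subtype.val : {v // v ∉ s} → V) *ᵥ (h ∘ Subtype.val) := by
  ext i
  simp only [Function.comp_apply, Pi.add_apply, mulVec, dotProduct, submatrix_apply]
  rw [← Finset.sum_add_sum_compl s, ← Finset.sum_coe_sort s,
    Finset.sum_subtype sᶜ fun _ => Finset.mem_compl]

theorem SimpleGraph.Reachable.lift {α β : Type*} {G : SimpleGraph α} {G' : SimpleGraph β}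
    (f : α → β) (hf : ∀ a b, G.Adj a b → G'.Reachable (f a) (f b)) {a b : α}
    (h : G.Reachable a b) : G'.Reachable (f a) (f b) := by
  rw [reachable_iff_reflTransGen] at h ⊢
  exact Relation.ReflTransGen.lift' f
    (fun a b hab => (reachable_iff_reflTransGen _ _).1 (hf a b hab)) _ _ h

theorem Finset.pair_eq_pair_iff {α : Type*} [DecidableEq α] {x y z w : α} :
    ({x, y} : Finset α) = {z, w} ↔ x = z ∧ y = w ∨ x = w ∧ y = z := by
  rw [← Finset.coe_inj, Finset.coe_pair, Finset.coe_pair, Set.pair_eq_pair_iff]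

theorem Finset.sum_ite_pair_eq {α M : Type*} [Fintype α] [DecidableEq α] [AddCommMonoid M]
    {u w : α} (huw : u ≠ w) (x : α) (g : α → M) :
    ∑ y, (if ({x, y} : Finset α) = {u, w} then g y else 0)
      = if x = u then g w else if x = w then g u else 0 := by
  by_cases hxu : x = u
  · subst hxu; simp [Finset.pair_eq_pair_iff, huw]
  · by_cases hxw : x = w
    · subst hxw; simp [Finset.pair_eq_pair_iff, hxu]
    · simp [Finset.pair_eq_pair_iff, hxu, hxw]

def glueOn {V β : Type*} [DecidableEq V] (N : Finset V) (f : {v // v ∈ N} → β)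
    (g : {v // v ∉ N} → β) : V → β :=
  fun v => if hv : v ∈ N then f ⟨v, hv⟩ else g ⟨v, hv⟩

lemma glueOn_comp_val_mem {V β : Type*} [DecidableEq V] {N : Finset V} (f : {v // v ∈ N} → β)
    (g : {v // v ∉ N} → β) : glueOn N f g ∘ Subtype.val = f :=
  funext fun v => dif_pos v.prop

lemma glueOn_comp_val_notMem {V β : Type*} [DecidableEq V] {N : Finset V} (f : {v // v ∈ N} → β)
    (g : {v // v ∉ N} → β) : glueOn N f g ∘ Subtype.val = g :=
  funext fun v => dif_neg v.prop

section Network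

variable {V : Type*} [Fintype V] [DecidableEq V] {c : V → V → ℝ}

noncomputable def dirichletLap (c : V → V → ℝ) (N : Finset V) :
    Matrix {v : V // v ∉ N} {v : V // v ∉ N} ℝ :=
  (netLap c).submatrix Subtype.val Subtype.val

def IsHarmonicOff (c : V → V → ℝ) (N : Finset V) (h : V → ℝ) : Prop :=
  ∀ v, v ∉ N → (netLap c *ᵥ h) v = 0

lemma netLap_transpose (hsymm : ∀ v w, c v w = c w v) : (netLap c)ᵀ = netLap c := by
  ext v w
  by_cases hvw : v = w
  · subst hvw; rfl
  · simp [netLap, hvw, Ne.symm hvw, hsymm v w]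

lemma netLap_mulVec_apply (hdiag : ∀ v, c v v = 0) (h : V → ℝ) (v : V) :
    (netLap c *ᵥ h) v = ∑ u, c v u * (h v - h u) := by
  have hentry : ∀ u, netLap c v u = (if v = u then ∑ w, c v w else 0) - c v u := by
    intro u
    by_cases hvu : v = u
    · subst hvu; simp [netLap, hdiag v]
    · simp [netLap, hvu]
  simp only [mulVec, dotProduct, hentry, sub_mul, ite_mul, zero_mul, mul_sub,
    Finset.sum_sub_distrib, Finset.sum_ite_eq, Finset.mem_univ, if_true, Finset.sum_mul]

lemma two_mul_dotProduct_netLap_mulVec (hsymm : ∀ v w, c v w = c w v)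
    (hdiag : ∀ v, c v v = 0) (h : V → ℝ) :
    2 * (h ⬝ᵥ (netLap c *ᵥ h)) = ∑ v, ∑ u, c v u * (h v - h u) ^ 2 := by
  have hform : h ⬝ᵥ (netLap c *ᵥ h) = ∑ v, ∑ u, c v u * (h v * h v - h v * h u) := by
    simp only [dotProduct, netLap_mulVec_apply hdiag, Finset.mul_sum]
    exact Finset.sum_congr rfl fun v _ => Finset.sum_congr rfl fun u _ => by ring
  have hswap : ∑ v, ∑ u, c v u * (h v * h v - h v * h u)
      = ∑ v, ∑ u, c v u * (h u * h u - h u * h v) := by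
    rw [Finset.sum_comm]
    simp only [hsymm]
  calc 2 * (h ⬝ᵥ (netLap c *ᵥ h))
      = ∑ v, ∑ u, c v u * (h v * h v - h v * h u)
        + ∑ v, ∑ u, c v u * (h u * h u - h u * h v) := by rw [two_mul, hform, ← hswap]
    _ = ∑ v, ∑ u, c v u * (h v - h u) ^ 2 := by
      rw [← Finset.sum_add_distrib]
      refine Finset.sum_congr rfl fun v _ => ?_
      rw [← Finset.sum_add_distrib]
      exact Finset.sum_congr rfl fun u _ => by ring

lemma apply_eq_of_dotProduct_netLap_mulVec_eq_zero (hsymm : ∀ v w, c v w = c w v)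
    (hnonneg : ∀ v w, 0 ≤ c v w) (hdiag : ∀ v, c v v = 0)
    (hconn : (SimpleGraph.fromRel fun v w : V => c v w ≠ 0).Preconnected) {h : V → ℝ}
    (h0 : h ⬝ᵥ (netLap c *ᵥ h) = 0) (v w : V) : h v = h w := by
  have hterm_nonneg : ∀ v u, 0 ≤ c v u * (h v - h u) ^ 2 :=
    fun v u => mul_nonneg (hnonneg v u) (sq_nonneg _)
  have hterm : ∀ v u, c v u * (h v - h u) ^ 2 = 0 := by
    have henergy := two_mul_dotProduct_netLap_mulVec hsymm hdiag h
    rw [h0, mul_zero, eq_comm, Finset.sum_eq_zero_iff_of_nonneg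
      fun v _ => Finset.sum_nonneg fun u _ => hterm_nonneg v u] at henergy
    exact fun v u => (Finset.sum_eq_zero_iff_of_nonneg fun u _ => hterm_nonneg v u).1
      (henergy v (Finset.mem_univ v)) u (Finset.mem_univ u)
  have hedge : ∀ a b, c a b ≠ 0 → h a = h b := fun a b hab =>
    sub_eq_zero.1 (pow_eq_zero_iff two_ne_zero |>.1 ((mul_eq_zero.1 (hterm a b)).resolve_left hab))
  refine SimpleGraph.reachable_bot.1 ((hconn v w).lift h fun a b hab => ?_)
  rw [SimpleGraph.fromRel_adj] at hab
  rcases hab.2 with hab | hba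
  · rw [hedge a b hab]
  · rw [hedge b a hba]

theorem eq_zero_of_isHarmonicOff (hsymm : ∀ v w, c v w = c w v) (hnonneg : ∀ v w, 0 ≤ c v w)
    (hdiag : ∀ v, c v v = 0)
    (hconn : (SimpleGraph.fromRel fun v w : V => c v w ≠ 0).Preconnected) {N : Finset V}
    (hN : N.Nonempty) {h : V → ℝ} (hh : IsHarmonicOff c N h) (hbd : ∀ v ∈ N, h v = 0) :
    h = 0 := by
  have henergy : h ⬝ᵥ (netLap c *ᵥ h) = 0 := by
    refine Finset.sum_eq_zero fun v _ => ?_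
    by_cases hv : v ∈ N
    · rw [hbd v hv, zero_mul]
    · rw [hh v hv, mul_zero]
  obtain ⟨n, hn⟩ := hN
  ext v
  rw [apply_eq_of_dotProduct_netLap_mulVec_eq_zero hsymm hnonneg hdiag hconn henergy v n,
    hbd n hn, Pi.zero_apply]

theorem isUnit_det_dirichletLap (hsymm : ∀ v w, c v w = c w v) (hnonneg : ∀ v w, 0 ≤ c v w)
    (hdiag : ∀ v, c v v = 0)
    (hconn : (SimpleGraph.fromRel fun v w : V => c v w ≠ 0).Preconnected) {N : Finset V}
    (hN : N.Nonempty) : IsUnit (dirichletLap c N).det := by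
  rw [isUnit_iff_ne_zero, Ne, ← Matrix.exists_mulVec_eq_zero_iff]
  rintro ⟨x, hx, hCx⟩
  have hx_val : glueOn N 0 x ∘ Subtype.val = x := glueOn_comp_val_notMem 0 x
  have hharm : IsHarmonicOff c N (glueOn N 0 x) := by
    intro v hv
    have hblock := congrFun (Matrix.mulVec_comp_eq_submatrix_mulVec_add (netLap c)
      (Subtype.val : {v // v ∉ N} → V) N (glueOn N 0 x)) ⟨v, hv⟩
    rw [glueOn_comp_val_mem, hx_val, mulVec_zero, zero_add] at hblock
    exact hblock.trans (congrFun hCx ⟨v, hv⟩)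
  refine hx ?_
  rw [← hx_val, eq_zero_of_isHarmonicOff hsymm hnonneg hdiag hconn hN hharm
    fun v hv => by simp [glueOn, hv]]
  rfl

theorem respMat_mulVec_of_isHarmonicOff (hsymm : ∀ v w, c v w = c w v) {N : Finset V}
    (hdet : IsUnit (dirichletLap c N).det) {h : V → ℝ} (hh : IsHarmonicOff c N h) :
    respMat c N *ᵥ (h ∘ Subtype.val) = -((netLap c *ᵥ h) ∘ Subtype.val) := by
  set A := (netLap c).submatrix (Subtype.val : {v // v ∈ N} → V)
    (Subtype.val : {v // v ∈ N} → V)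
  set B := (netLap c).submatrix (Subtype.val : {v // v ∈ N} → V)
    (Subtype.val : {v // v ∉ N} → V)
  have hBt : Bᵀ = (netLap c).submatrix Subtype.val Subtype.val := by
    rw [Matrix.transpose_submatrix, netLap_transpose hsymm]
  have hinterior : Bᵀ *ᵥ (h ∘ Subtype.val) + dirichletLap c N *ᵥ (h ∘ Subtype.val) = 0 := by
    rw [hBt]
    exact (Matrix.mulVec_comp_eq_submatrix_mulVec_add _ _ N h).symm.trans
      (funext fun v => hh v.val v.prop)
  have hsolve : (dirichletLap c N)⁻¹ *ᵥ (Bᵀ *ᵥ (h ∘ Subtype.val)) = -(h ∘ Subtype.val) := by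
    rw [eq_neg_of_add_eq_zero_left hinterior, mulVec_neg, mulVec_mulVec,
      Matrix.nonsing_inv_mul _ hdet, one_mulVec]
  calc respMat c N *ᵥ (h ∘ Subtype.val)
      = -(A *ᵥ (h ∘ Subtype.val))
        + B *ᵥ ((dirichletLap c N)⁻¹ *ᵥ (Bᵀ *ᵥ (h ∘ Subtype.val))) := by
        rw [respMat, add_mulVec, neg_mulVec, ← mulVec_mulVec, ← mulVec_mulVec]
        rfl
    _ = -(A *ᵥ (h ∘ Subtype.val) + B *ᵥ (h ∘ Subtype.val)) := by
        rw [hsolve, mulVec_neg, neg_add]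
    _ = -((netLap c *ᵥ h) ∘ Subtype.val) := by
        rw [Matrix.mulVec_comp_eq_submatrix_mulVec_add _ _ N]

theorem respMat_apply_of_isHarmonicOff (hsymm : ∀ v w, c v w = c w v) {N : Finset V}
    (hdet : IsUnit (dirichletLap c N).det) {h : V → ℝ} (hh : IsHarmonicOff c N h)
    {j : {v // v ∈ N}} (hbd : h ∘ Subtype.val = Pi.single j 1) (i : {v // v ∈ N}) :
    respMat c N i j = -(netLap c *ᵥ h) i := by
  have := congrFun (respMat_mulVec_of_isHarmonicOff hsymm hdet hh) i
  rwa [hbd, mulVec_single_one] at this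

theorem exists_isHarmonicOff_comp_val_eq {N : Finset V} (hdet : IsUnit (dirichletLap c N).det)
    (f : {v // v ∈ N} → ℝ) : ∃ h, IsHarmonicOff c N h ∧ h ∘ Subtype.val = f := by
  set D := (netLap c).submatrix (Subtype.val : {v // v ∉ N} → V)
    (Subtype.val : {v // v ∈ N} → V)
  set g := -((dirichletLap c N)⁻¹ * D) *ᵥ f
  refine ⟨glueOn N f g, fun v hv => ?_, glueOn_comp_val_mem f g⟩
  have hinterior : D *ᵥ f + dirichletLap c N *ᵥ g = 0 := by
    rw [mulVec_mulVec, Matrix.mul_neg, ← Matrix.mul_assoc, Matrix.mul_nonsing_inv _ hdet,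
      Matrix.one_mul, neg_mulVec, add_neg_cancel]
  have hblock := Matrix.mulVec_comp_eq_submatrix_mulVec_add (netLap c)
    (Subtype.val : {v // v ∉ N} → V) N (glueOn N f g)
  rw [glueOn_comp_val_mem, glueOn_comp_val_notMem] at hblock
  exact (congrFun hblock ⟨v, hv⟩).trans (congrFun hinterior ⟨v, hv⟩)

end Network

section Series

variable {V : Type*} [DecidableEq V] {c : V → V → ℝ} {v₀ u₀ w₀ : V}

noncomputable def seriesCond (c : V → V → ℝ) (v₀ u₀ w₀ : V) :
    {v : V // v ≠ v₀} → {v : V // v ≠ v₀} → ℝ := fun x y =>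
  c x.val y.val +
    (if ({x.val, y.val} : Finset V) = {u₀, w₀} then
      c v₀ u₀ * c v₀ w₀ / (c v₀ u₀ + c v₀ w₀)
     else 0)

lemma seriesCond_symm (hsymm : ∀ v w, c v w = c w v) (x y : {v : V // v ≠ v₀}) :
    seriesCond c v₀ u₀ w₀ x y = seriesCond c v₀ u₀ w₀ y x := by
  rw [seriesCond, seriesCond, hsymm, Finset.pair_comm]

lemma seriesCond_nonneg (hnonneg : ∀ v w, 0 ≤ c v w) (x y : {v : V // v ≠ v₀}) :
    0 ≤ seriesCond c v₀ u₀ w₀ x y := by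
  have := div_nonneg (mul_nonneg (hnonneg v₀ u₀) (hnonneg v₀ w₀))
    (add_nonneg (hnonneg v₀ u₀) (hnonneg v₀ w₀))
  exact add_nonneg (hnonneg _ _) (by split_ifs; exacts [this, le_rfl])

lemma seriesCond_self (hdiag : ∀ v, c v v = 0) (huw : u₀ ≠ w₀) (x : {v : V // v ≠ v₀}) :
    seriesCond c v₀ u₀ w₀ x x = 0 := by
  rw [seriesCond, hdiag, if_neg, add_zero]
  rw [Finset.pair_eq_pair_iff]
  rintro (⟨rfl, rfl⟩ | ⟨rfl, rfl⟩) <;> exact huw rfl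

theorem seriesCond_connected (hsymm : ∀ v w, c v w = c w v) (hnonneg : ∀ v w, 0 ≤ c v w)
    (hconn : (SimpleGraph.fromRel fun v w : V => c v w ≠ 0).Preconnected)
    (hu₀ : u₀ ≠ v₀) (hw₀ : w₀ ≠ v₀) (huw : u₀ ≠ w₀) (hc1 : 0 < c v₀ u₀) (hc2 : 0 < c v₀ w₀)
    (hnbr : ∀ u : V, c v₀ u ≠ 0 → u = u₀ ∨ u = w₀) :
    (SimpleGraph.fromRel fun x y => seriesCond c v₀ u₀ w₀ x y ≠ 0).Connected := by
  set G' := SimpleGraph.fromRel fun x y => seriesCond c v₀ u₀ w₀ x y ≠ 0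
  have hadj : ∀ x y, x ≠ y → 0 < seriesCond c v₀ u₀ w₀ x y → G'.Adj x y :=
    fun x y hxy hpos => (SimpleGraph.fromRel_adj _ x y).2 ⟨hxy, Or.inl hpos.ne'⟩
  have hγ : 0 < c v₀ u₀ * c v₀ w₀ / (c v₀ u₀ + c v₀ w₀) :=
    div_pos (mul_pos hc1 hc2) (add_pos hc1 hc2)
  let φ : V → {v : V // v ≠ v₀} := fun v => if hv : v = v₀ then ⟨u₀, hu₀⟩ else ⟨v, hv⟩
  have hφ₀ : φ v₀ = ⟨u₀, hu₀⟩ := dif_pos rfl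
  have hφ : ∀ v (hv : v ≠ v₀), φ v = ⟨v, hv⟩ := fun v hv => dif_neg hv
  have hfrom_v₀ : ∀ b, c v₀ b ≠ 0 → G'.Reachable (φ v₀) (φ b) := by
    intro b hb
    rw [hφ₀]
    rcases hnbr b hb with hbu | hbw
    · rw [hbu, hφ u₀ hu₀]
    · rw [hbw, hφ w₀ hw₀]
      refine (hadj _ _ (fun h => huw (congrArg Subtype.val h)) ?_).reachable
      rw [seriesCond, if_pos rfl]
      exact add_pos_of_nonneg_of_pos (hnonneg _ _) hγ
  have hstep : ∀ a b, (SimpleGraph.fromRel fun v w : V => c v w ≠ 0).Adj a b →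
      G'.Reachable (φ a) (φ b) := by
    intro a b hab
    obtain ⟨hne, hab⟩ := (SimpleGraph.fromRel_adj _ a b).1 hab
    have hab : c a b ≠ 0 := hab.elim id fun h => hsymm a b ▸ h
    by_cases ha : a = v₀
    · rw [ha] at hab ⊢; exact hfrom_v₀ b hab
    by_cases hb : b = v₀
    · rw [hb] at hab ⊢; exact (hfrom_v₀ a (hsymm a v₀ ▸ hab)).symm
    rw [hφ a ha, hφ b hb]
    refine (hadj _ _ (fun h => hne (congrArg Subtype.val h)) ?_).reachable
    exact add_pos_of_pos_of_nonneg ((hnonneg a b).lt_of_ne' hab) (by split_ifs <;> positivity)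
  refine (SimpleGraph.connected_iff_exists_forall_reachable _).2 ⟨φ v₀, fun x => ?_⟩
  simpa only [hφ x.val x.prop] using (hconn v₀ x.val).lift φ hstep

theorem netLap_seriesCond_mulVec [Fintype V] (hsymm : ∀ v w, c v w = c w v)
    (hdiag : ∀ v, c v v = 0) (hu₀ : u₀ ≠ v₀) (hw₀ : w₀ ≠ v₀) (huw : u₀ ≠ w₀)
    (hc : c v₀ u₀ + c v₀ w₀ ≠ 0) (hnbr : ∀ u : V, c v₀ u ≠ 0 → u = u₀ ∨ u = w₀)
    {h : V → ℝ} (hh : (netLap c *ᵥ h) v₀ = 0) :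
    netLap (seriesCond c v₀ u₀ w₀) *ᵥ (h ∘ Subtype.val) = (netLap c *ᵥ h) ∘ Subtype.val := by
  set γ := c v₀ u₀ * c v₀ w₀ / (c v₀ u₀ + c v₀ w₀)
  have hharm : c v₀ u₀ * (h v₀ - h u₀) + c v₀ w₀ * (h v₀ - h w₀) = 0 := by
    rw [← Finset.sum_pair huw (f := fun y => c v₀ y * (h v₀ - h y)), ← hh,
      netLap_mulVec_apply hdiag]
    refine Finset.sum_subset (Finset.subset_univ _) fun y _ hy => ?_
    have hcy : c v₀ y = 0 := by
      by_contra hcy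
      rcases hnbr y hcy with rfl | rfl <;> simp at hy
    rw [hcy, zero_mul]
  have hseries : ∀ x, ∑ y, (if ({x, y} : Finset V) = {u₀, w₀} then γ * (h x - h y) else 0)
      = c x v₀ * (h x - h v₀) := by
    intro x
    rw [Finset.sum_ite_pair_eq huw]
    split_ifs with hxu hxw
    · rw [hxu, hsymm u₀, div_mul_eq_mul_div, div_eq_iff hc]
      linear_combination c v₀ u₀ * hharm
    · rw [hxw, hsymm w₀, div_mul_eq_mul_div, div_eq_iff hc]
      linear_combination c v₀ w₀ * hharm
    · have hcx : c v₀ x = 0 := not_not.1 fun hcx => (hnbr x hcx).elim hxu hxw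
      rw [hsymm, hcx, zero_mul]
  have hv₀_not_pair : ∀ x, ({x, v₀} : Finset V) ≠ {u₀, w₀} := by
    intro x
    rw [Ne, Finset.pair_eq_pair_iff]
    rintro (⟨-, h⟩ | ⟨-, h⟩)
    exacts [hw₀ h.symm, hu₀ h.symm]
  ext x
  rw [Function.comp_apply, netLap_mulVec_apply (seriesCond_self hdiag huw),
    netLap_mulVec_apply hdiag, Fintype.sum_eq_add_sum_subtype_ne _ v₀, ← hseries,
    Fintype.sum_eq_add_sum_subtype_ne _ v₀, if_neg (hv₀_not_pair x), zero_add,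
    ← Finset.sum_add_distrib]
  refine Finset.sum_congr rfl fun y _ => ?_
  simp only [Function.comp_apply, seriesCond]
  split_ifs <;> ring

end Series

/-- The series transformation preserves the response matrix: if the internal vertex `v₀`
has exactly the two distinct neighbors `u₀, w₀` with conductances `c₁ = c v₀ u₀` and
`c₂ = c v₀ w₀`, then deleting `v₀` (and its edges) and increasing the conductance
between `u₀` and `w₀` by `c₁c₂/(c₁+c₂)` yields a connected network with the same
response matrix on the node set `N`. -/
theorem series_preserves_response {V : Type*} [Fintype V] [DecidableEq V]
    (c : V → V → ℝ) (N : Finset V)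
    (hsymm : ∀ v w, c v w = c w v)
    (hnonneg : ∀ v w, 0 ≤ c v w)
    (hdiag : ∀ v, c v v = 0)
    (hconn : (SimpleGraph.fromRel fun v w : V => c v w ≠ 0).Connected)
    (hN : N.Nonempty)
    (v₀ u₀ w₀ : V) (hv₀ : v₀ ∉ N)
    (h0u : v₀ ≠ u₀) (h0w : v₀ ≠ w₀) (huw : u₀ ≠ w₀)
    (hc1 : 0 < c v₀ u₀) (hc2 : 0 < c v₀ w₀)
    (hnbr : ∀ u : V, c v₀ u ≠ 0 → u = u₀ ∨ u = w₀) :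
    let c' : {v : V // v ≠ v₀} → {v : V // v ≠ v₀} → ℝ := fun x y =>
      c x.val y.val +
        (if ({x.val, y.val} : Finset V) = {u₀, w₀} then
          c v₀ u₀ * c v₀ w₀ / (c v₀ u₀ + c v₀ w₀)
         else 0)
    let N' : Finset {v : V // v ≠ v₀} := N.subtype (fun v => v ≠ v₀)
    (SimpleGraph.fromRel fun x y : {v : V // v ≠ v₀} => c' x y ≠ 0).Connected ∧
    ∀ i j : {v : V // v ∈ N},
      respMat c' N'
        ⟨⟨i.val, fun h => hv₀ (h ▸ i.property)⟩, Finset.mem_subtype.mpr i.property⟩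
        ⟨⟨j.val, fun h => hv₀ (h ▸ j.property)⟩, Finset.mem_subtype.mpr j.property⟩
      = respMat c N i j := by
  intro c' N'
  have hc : 0 < c v₀ u₀ + c v₀ w₀ := add_pos hc1 hc2
  have hconn' : (SimpleGraph.fromRel fun x y => c' x y ≠ 0).Connected :=
    seriesCond_connected hsymm hnonneg hconn.preconnected h0u.symm h0w.symm huw hc1 hc2 hnbr
  have hN' : N'.Nonempty := by
    obtain ⟨n, hn⟩ := hN
    exact ⟨⟨n, fun h => hv₀ (h ▸ hn)⟩, Finset.mem_subtype.2 hn⟩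
  have hdet := isUnit_det_dirichletLap hsymm hnonneg hdiag hconn.preconnected hN
  have hdet' : IsUnit (dirichletLap c' N').det :=
    isUnit_det_dirichletLap (seriesCond_symm hsymm) (seriesCond_nonneg hnonneg)
      (seriesCond_self hdiag huw) hconn'.preconnected hN'
  refine ⟨hconn', fun i j => ?_⟩
  obtain ⟨h, hh, hbd⟩ := exists_isHarmonicOff_comp_val_eq hdet (Pi.single j 1)
  have hΔ : netLap c' *ᵥ (h ∘ Subtype.val) = (netLap c *ᵥ h) ∘ Subtype.val :=
    netLap_seriesCond_mulVec hsymm hdiag h0u.symm h0w.symm huw hc.ne' hnbr (hh v₀ hv₀)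
  have hh' : IsHarmonicOff c' N' (h ∘ Subtype.val) := fun x hx => by
    rw [hΔ]
    exact hh x.val fun hx' => hx (Finset.mem_subtype.2 hx')
  have hbd' : (h ∘ Subtype.val) ∘ Subtype.val = Pi.single
      (⟨⟨j.val, fun h => hv₀ (h ▸ j.property)⟩, Finset.mem_subtype.2 j.property⟩ :
        {x // x ∈ N'}) 1 := by
    ext k
    have := congrFun hbd ⟨k.val.val, Finset.mem_subtype.1 k.property⟩
    simpa [Pi.single_apply, Subtype.ext_iff] using this
  rw [respMat_apply_of_isHarmonicOff (c := c') (seriesCond_symm hsymm) hdet' hh' hbd',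
    respMat_apply_of_isHarmonicOff hsymm hdet hh hbd, hΔ]
  rfl
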